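/- arXiv:1110.4954 — 13 statements merged into one kernel-verified Lean document; each statement's English description precedes it below -/
import Mathlib

section
/- The row-adjusted meet matrix factorizes as (S)_{f_1,…,f_n} = Υ E_D^T, i.e. for all i, j ∈ {1,…,n} we have f_i(x_i ∧ x_j) = Σ_{k=1}^{m} (E_D)_{ik} Ψ_{D,f_i}(d_k) (E_D)_{jk}. -/
open Finset
open scoped Classical

/-- **Structure theorem for row-adjusted meet matrices.**
Let `(P, ≤)` be a lattice, `x : Fin n → P` an injective listing of `S` with
`x i ≤ x j → i ≤ j`, and `f i : P → ℂ` row functions. Let `d : Fin m → P` be an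
injective listing of a set `D` (ordered compatibly) containing all meets
`x i ⊓ x j`, and let `μD` be the Möbius function of the finite poset `D`
(characterized by its defining property). With
`Ψ_{D,f i}(d k) = ∑_{d v ≤ d k} f i (d v) * μD v k` and
`(E_D)_{i k} = 1` iff `d k ≤ x i`, we have
`f i (x i ⊓ x j) = ∑ k, (E_D)_{i k} * Ψ_{D,f i}(d k) * (E_D)_{j k}`,
i.e. `(S)_{f₁,…,fₙ} = Υ E_Dᵀ`. -/
theorem row_adjusted_meet_matrix_factorization
    {P : Type*} [Lattice P] {n m : ℕ}
    (x : Fin n → P) (d : Fin m → P) (f : Fin n → P → ℂ)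
    (μD : Fin m → Fin m → ℂ)
    (hxinj : Function.Injective x)
    (hxord : ∀ i j : Fin n, x i ≤ x j → i ≤ j)
    (hdinj : Function.Injective d)
    (hdord : ∀ i j : Fin m, d i ≤ d j → i ≤ j)
    (hD : ∀ i j : Fin n, ∃ k : Fin m, d k = x i ⊓ x j)
    (hμ0 : ∀ i j : Fin m, ¬ d i ≤ d j → μD i j = 0)
    (hμ : ∀ i j : Fin m, d i ≤ d j →
      (∑ v ∈ univ.filter (fun v => d i ≤ d v ∧ d v ≤ d j), μD i v) =
        if i = j then 1 else 0) :
    ∀ i j : Fin n,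
      f i (x i ⊓ x j) =
        ∑ k : Fin m,
          (if d k ≤ x i then (1 : ℂ) else 0) *
            (∑ v ∈ univ.filter (fun v => d v ≤ d k), f i (d v) * μD v k) *
            (if d k ≤ x j then (1 : ℂ) else 0) := by
  intro i j
  obtain ⟨k0, hk0⟩ := hD i j
  have hle : ∀ k : Fin m, (d k ≤ x i ∧ d k ≤ x j) ↔ d k ≤ d k0 := by
    intro k; rw [hk0]; exact (le_inf_iff).symm
  have h1 : (∑ k : Fin m,
          (if d k ≤ x i then (1 : ℂ) else 0) *
            (∑ v ∈ univ.filter (fun v => d v ≤ d k), f i (d v) * μD v k) *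
            (if d k ≤ x j then (1 : ℂ) else 0))
      = ∑ k : Fin m, ∑ v : Fin m,
          if d v ≤ d k ∧ d k ≤ d k0 then f i (d v) * μD v k else 0 := by
    apply Finset.sum_congr rfl
    intro k _
    by_cases hk : d k ≤ d k0
    · obtain ⟨ha, hb⟩ := (hle k).mpr hk
      rw [if_pos ha, if_pos hb, one_mul, mul_one, Finset.sum_filter]
      apply Finset.sum_congr rfl
      intro v _
      by_cases hv : d v ≤ d k
      · simp [hv, hk]
      · simp [hv]
    · have hni : ¬ (d k ≤ x i ∧ d k ≤ x j) := fun h => hk ((hle k).mp h)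
      have : (∑ v : Fin m, if d v ≤ d k ∧ d k ≤ d k0 then f i (d v) * μD v k else 0) = 0 := by
        apply Finset.sum_eq_zero
        intro v _
        simp [hk]
      rw [this]
      by_cases ha : d k ≤ x i
      · rw [if_neg (fun hb => hni ⟨ha, hb⟩), mul_zero]
      · rw [if_neg ha, zero_mul, zero_mul]
  rw [h1, Finset.sum_comm]
  have h2 : ∀ v : Fin m,
      (∑ k : Fin m, if d v ≤ d k ∧ d k ≤ d k0 then f i (d v) * μD v k else 0)
      = if v = k0 then f i (d k0) else 0 := by
    intro v
    by_cases hv : d v ≤ d k0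
    · have heq : (∑ k : Fin m, if d v ≤ d k ∧ d k ≤ d k0 then f i (d v) * μD v k else 0)
          = f i (d v) * ∑ k ∈ univ.filter (fun k => d v ≤ d k ∧ d k ≤ d k0), μD v k := by
        rw [Finset.mul_sum, Finset.sum_filter]
      rw [heq, hμ v k0 hv]
      by_cases hvk : v = k0 <;> simp [hvk]
    · have hvne : v ≠ k0 := fun h => hv (h ▸ le_refl _)
      rw [if_neg hvne]
      apply Finset.sum_eq_zero
      intro k _
      have : ¬ (d v ≤ d k ∧ d k ≤ d k0) := fun h => hv (h.1.trans h.2)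
      simp [this]
  calc f i (x i ⊓ x j) = f i (d k0) := by rw [hk0]
    _ = ∑ v : Fin m, if v = k0 then f i (d k0) else 0 := by
        rw [Finset.sum_ite_eq' univ k0 (fun _ => f i (d k0)), if_pos (Finset.mem_univ k0)]
    _ = _ := by
        apply Finset.sum_congr rfl
        intro v _
        rw [h2 v]
end

section
/- If the set S is meet closed (so that one may take D = S), then Υ = (S)_{f_1,…,f_n} (E_S^T)^{-1}; here E_S^T is invertible and (E_S^T)^{-1} is the n×n matrix whose (i,j) entry is μ_S(x_i, x_j), the Möbius function of the poset (S, ≤). -/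
/-!
Let `ζ` be the zeta matrix of `(S, ≤)`, `ζ i j = 1` iff `x i ≤ x j`, so `ζ = E_Sᵀ`. The defining
recursion of the Möbius function says `μ * ζ = 1`, hence `ζ⁻¹ = μ`. With `F i k = f i (x k)` and
`Ψ = F * μ`, Möbius inversion reads `Ψ * ζ = F`. Because `S` is meet closed, `x u ≤ x i` and
`x u ≤ x j` together mean `x u ≤ x k` for the `k` with `x k = x i ⊓ x j`, so
`(E_S ⊙ Ψ) * ζ = (S)_f`; multiplying by `μ = ζ⁻¹` on the right gives `Υ = E_S ⊙ Ψ = (S)_f * μ`.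
-/

open Finset Matrix
open scoped Classical

noncomputable def zetaMatrix {ι P R : Type*} [Preorder P] [Semiring R] (x : ι → P) :
    Matrix ι ι R :=
  of fun i j => if x i ≤ x j then 1 else 0

theorem mobius_mul_zetaMatrix_eq_one {ι P R : Type*} [Fintype ι] [DecidableEq ι] [Preorder P]
    [Semiring R] {x : ι → P} {μ : ι → ι → R}
    (hμ0 : ∀ i j, ¬ x i ≤ x j → μ i j = 0)
    (hμ : ∀ i j, x i ≤ x j →
      (∑ v ∈ univ.filter (fun v => x i ≤ x v ∧ x v ≤ x j), μ i v) = if i = j then 1 else 0) :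
    of μ * zetaMatrix x = 1 := by
  ext i j
  simp only [mul_apply, one_apply, of_apply, zetaMatrix, mul_ite, mul_one, mul_zero]
  rw [← sum_filter]
  by_cases hij : x i ≤ x j
  · rw [← hμ i j hij, ← sum_filter_of_ne (p := fun v => x i ≤ x v)
      fun v _ hv => not_not.mp (mt (hμ0 i v) hv), filter_filter]
    simp only [and_comm]
  · rw [if_neg (by rintro rfl; exact hij le_rfl)]
    exact sum_eq_zero fun v hv => hμ0 i v fun hiv => hij (hiv.trans (mem_filter.mp hv).2)

theorem zetaMatrix_transpose_hadamard_mul_zetaMatrix {ι P R : Type*} [Fintype ι]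
    [SemilatticeInf P] [Semiring R] {x : ι → P} (hmeet : ∀ i j, ∃ k, x k = x i ⊓ x j)
    {N : Matrix ι ι R} {g : ι → P → R} (hg : N * zetaMatrix x = of fun i k => g i (x k)) :
    ((zetaMatrix x)ᵀ ⊙ N) * zetaMatrix x = of fun i j => g i (x i ⊓ x j) := by
  ext i j
  obtain ⟨k, hk⟩ := hmeet i j
  have hgk : (N * zetaMatrix x : Matrix ι ι R) i k = g i (x k) := by rw [hg, of_apply]
  rw [of_apply, ← hk, ← hgk, mul_apply, mul_apply]
  refine sum_congr rfl fun u _ => ?_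
  simp only [hadamard_apply, transpose_apply, zetaMatrix, of_apply, hk, le_inf_iff, ite_mul,
    one_mul, zero_mul, mul_ite, mul_one, mul_zero, ← ite_and, and_comm]

theorem row_adjusted_meet_matrix_upsilon_eq_general
    {P : Type*} [Lattice P] {n : ℕ}
    (x : Fin n → P) (f : Fin n → P → ℂ) (μ : Fin n → Fin n → ℂ)
    (hmeet : ∀ i j : Fin n, ∃ k : Fin n, x k = x i ⊓ x j)
    (hμ0 : ∀ i j : Fin n, ¬ x i ≤ x j → μ i j = 0)
    (hμ : ∀ i j : Fin n, x i ≤ x j →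
      (∑ v ∈ univ.filter (fun v => x i ≤ x v ∧ x v ≤ x j), μ i v) =
        if i = j then 1 else 0) :
    IsUnit (Matrix.of fun i j : Fin n => if x j ≤ x i then (1 : ℂ) else 0)ᵀ ∧
    (Matrix.of fun i j : Fin n => if x j ≤ x i then (1 : ℂ) else 0)ᵀ⁻¹ =
      Matrix.of (fun i j : Fin n => μ i j) ∧
    (Matrix.of fun i j : Fin n =>
        (if x j ≤ x i then (1 : ℂ) else 0) *
          (∑ v ∈ univ.filter (fun v => x v ≤ x j), f i (x v) * μ v j)) =
      (Matrix.of fun i j : Fin n => f i (x i ⊓ x j)) *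
        (Matrix.of fun i j : Fin n => if x j ≤ x i then (1 : ℂ) else 0)ᵀ⁻¹ := by
  have hζ : (of fun i j : Fin n => if x j ≤ x i then (1 : ℂ) else 0)ᵀ = zetaMatrix x := rfl
  have hμζ : of μ * zetaMatrix x = 1 := mobius_mul_zetaMatrix_eq_one hμ0 hμ
  have hζμ : zetaMatrix x * of μ = 1 := mul_eq_one_comm.mp hμζ
  rw [hζ, inv_eq_left_inv hμζ]
  refine ⟨.of_mul_eq_one_right _ hμζ, rfl, ?_⟩
  have hΨ : (of fun i j => ∑ v ∈ univ.filter (fun v => x v ≤ x j), f i (x v) * μ v j) =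
      (of fun i v => f i (x v)) * of μ := by
    ext i j
    simp only [of_apply, mul_apply]
    exact sum_filter_of_ne fun v _ hv => not_not.mp (mt (hμ0 v j) (right_ne_zero_of_mul hv))
  have hΨζ : (of fun i j => ∑ v ∈ univ.filter (fun v => x v ≤ x j), f i (x v) * μ v j) *
      zetaMatrix x = of fun i v => f i (x v) := by
    rw [hΨ, Matrix.mul_assoc, hμζ, Matrix.mul_one]
  rw [← zetaMatrix_transpose_hadamard_mul_zetaMatrix hmeet hΨζ, Matrix.mul_assoc, hζμ,
    Matrix.mul_one]
  rfl

/-- If `S` is meet closed (so one may take `D = S`), then `Υ = (S)_{f₁,…,fₙ} (E_Sᵀ)⁻¹`;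
here `E_Sᵀ` is invertible and `(E_Sᵀ)⁻¹` is the matrix whose `(i,j)` entry is
`μ_S(x i, x j)`, the Möbius function of the poset `(S, ≤)`. -/
theorem row_adjusted_meet_matrix_upsilon_eq
    {P : Type*} [Lattice P] {n : ℕ}
    (x : Fin n → P) (f : Fin n → P → ℂ) (μ : Fin n → Fin n → ℂ)
    (hxinj : Function.Injective x)
    (hxord : ∀ i j : Fin n, x i ≤ x j → i ≤ j)
    (hmeet : ∀ i j : Fin n, ∃ k : Fin n, x k = x i ⊓ x j)
    (hμ0 : ∀ i j : Fin n, ¬ x i ≤ x j → μ i j = 0)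
    (hμ : ∀ i j : Fin n, x i ≤ x j →
      (∑ v ∈ univ.filter (fun v => x i ≤ x v ∧ x v ≤ x j), μ i v) =
        if i = j then 1 else 0) :
    IsUnit (Matrix.of fun i j : Fin n => if x j ≤ x i then (1 : ℂ) else 0)ᵀ ∧
    (Matrix.of fun i j : Fin n => if x j ≤ x i then (1 : ℂ) else 0)ᵀ⁻¹ =
      Matrix.of (fun i j : Fin n => μ i j) ∧
    (Matrix.of fun i j : Fin n =>
        (if x j ≤ x i then (1 : ℂ) else 0) *
          (∑ v ∈ univ.filter (fun v => x v ≤ x j), f i (x v) * μ v j)) =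
      (Matrix.of fun i j : Fin n => f i (x i ⊓ x j)) *
        (Matrix.of fun i j : Fin n => if x j ≤ x i then (1 : ℂ) else 0)ᵀ⁻¹ :=
  row_adjusted_meet_matrix_upsilon_eq_general x f μ hmeet hμ0 hμ
end

section
/- Suppose S is meet closed and Ψ_{S,f_i}(x_i) ≠ 0 for every i = 1,…,n. Then rank (S)_{f_1,…,f_n} = n, i.e. the row-adjusted meet matrix has full rank. -/
open Finset Matrix
open scoped Classical

/-- If `S` is meet closed and `Ψ_{S,f i}(x i) ≠ 0` for every `i`, then the
row-adjusted meet matrix `(S)_{f₁,…,fₙ}` has full rank `n`. -/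
theorem row_adjusted_meet_matrix_rank_of_ne_zero
    {P : Type*} [Lattice P] {n : ℕ}
    (x : Fin n → P) (f : Fin n → P → ℂ) (μ : Fin n → Fin n → ℂ)
    (hxinj : Function.Injective x)
    (hxord : ∀ i j : Fin n, x i ≤ x j → i ≤ j)
    (hmeet : ∀ i j : Fin n, ∃ k : Fin n, x k = x i ⊓ x j)
    (hμ0 : ∀ i j : Fin n, ¬ x i ≤ x j → μ i j = 0)
    (hμ : ∀ i j : Fin n, x i ≤ x j →
      (∑ v ∈ univ.filter (fun v => x i ≤ x v ∧ x v ≤ x j), μ i v) =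
        if i = j then 1 else 0)
    (hΨ : ∀ i : Fin n,
      (∑ v ∈ univ.filter (fun v => x v ≤ x i), f i (x v) * μ v i) ≠ 0) :
    (Matrix.of fun i j : Fin n => f i (x i ⊓ x j)).rank = n := by
  classical
  set Ψ : Fin n → Fin n → ℂ := fun i k =>
    ∑ w ∈ univ.filter (fun w => x w ≤ x k), f i (x w) * μ w k with hΨdef
  set B : Matrix (Fin n) (Fin n) ℂ :=
    Matrix.of (fun i v => if x v ≤ x i then Ψ i v else 0) with hB
  set E : Matrix (Fin n) (Fin n) ℂ :=
    Matrix.of (fun j v => if x v ≤ x j then (1 : ℂ) else 0) with hE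
  have key : (Matrix.of fun i j : Fin n => f i (x i ⊓ x j)) = B * Eᵀ := by
    ext i j
    obtain ⟨k, hk⟩ := hmeet i j
    simp only [Matrix.mul_apply, Matrix.transpose_apply, Matrix.of_apply, hB, hE]
    have h1 : ∀ v : Fin n,
        (if x v ≤ x i then Ψ i v else 0) * (if x v ≤ x j then (1 : ℂ) else 0)
        = if x v ≤ x k then Ψ i v else 0 := by
      intro v
      have : x v ≤ x k ↔ x v ≤ x i ∧ x v ≤ x j := by rw [hk]; exact le_inf_iff
      by_cases h' : x v ≤ x k
      · rcases this.1 h' with ⟨ha, hb⟩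
        simp [ha, hb, h']
      · rw [if_neg h']
        by_cases ha : x v ≤ x i
        · have hb : ¬ x v ≤ x j := fun hb => h' (this.2 ⟨ha, hb⟩)
          simp [ha, hb]
        · simp [ha]
    have h2 : ∀ v : Fin n, Ψ i v = ∑ w : Fin n, f i (x w) * μ w v := by
      intro v
      refine Finset.sum_filter_of_ne fun w _ hw => ?_
      by_contra hle
      exact hw (by rw [hμ0 w v hle, mul_zero])
    have hsum : ∑ v ∈ univ.filter (fun v => x v ≤ x k), Ψ i v = f i (x k) :=
      calc ∑ v ∈ univ.filter (fun v => x v ≤ x k), Ψ i v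
          = ∑ v ∈ univ.filter (fun v => x v ≤ x k), ∑ w : Fin n, f i (x w) * μ w v :=
            Finset.sum_congr rfl fun v _ => h2 v
        _ = ∑ w : Fin n, f i (x w) * ∑ v ∈ univ.filter (fun v => x v ≤ x k), μ w v := by
          rw [Finset.sum_comm]
          exact Finset.sum_congr rfl fun w _ => by rw [Finset.mul_sum]
        _ = ∑ w : Fin n, f i (x w) * (if w = k then 1 else 0) := by
          refine Finset.sum_congr rfl fun w _ => ?_
          congr 1
          by_cases hwk : x w ≤ x k
          · rw [← hμ w k hwk]
            rw [Finset.sum_filter, Finset.sum_filter]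
            refine Finset.sum_congr rfl fun v _ => ?_
            by_cases hv : x v ≤ x k
            · by_cases hv2 : x w ≤ x v
              · simp [hv, hv2]
              · simp [hv, hv2, hμ0 w v hv2]
            · simp [hv, fun h : x w ≤ x v ∧ x v ≤ x k => hv h.2]
          · have hwk' : w ≠ k := fun h => hwk (h ▸ le_refl _)
            rw [if_neg hwk']
            refine Finset.sum_eq_zero fun v hv => ?_
            simp only [Finset.mem_filter, Finset.mem_univ, true_and] at hv
            by_cases hv2 : x w ≤ x v
            · exact absurd (hv2.trans hv) hwk
            · exact hμ0 w v hv2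
        _ = f i (x k) := by simp
    rw [← hk, ← hsum, Finset.sum_filter]
    exact Finset.sum_congr rfl fun v _ => (h1 v).symm
  rw [key]
  have hBt : Bᵀ.BlockTriangular id := by
    intro p q hpq
    simp only [Matrix.transpose_apply, Matrix.of_apply, hB]
    rw [if_neg]
    intro hle
    exact absurd (hxord p q hle) (not_le.2 hpq)
  have hEt : Eᵀ.BlockTriangular id := by
    intro p q hpq
    simp only [Matrix.transpose_apply, Matrix.of_apply, hE]
    rw [if_neg]
    intro hle
    exact absurd (hxord p q hle) (not_le.2 hpq)
  have hdet : (B * Eᵀ).det ≠ 0 := by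
    rw [Matrix.det_mul, ← Matrix.det_transpose B,
      Matrix.det_of_upperTriangular hBt, Matrix.det_of_upperTriangular hEt]
    have hBd : ∀ i, Bᵀ i i = Ψ i i := by
      intro i; simp [hB]
    have hEd : ∀ i, Eᵀ i i = 1 := by
      intro i; simp [hE]
    simp only [hBd, hEd, Finset.prod_const_one, mul_one]
    exact Finset.prod_ne_zero_iff.2 fun i _ => hΨ i
  have := Matrix.rank_of_isUnit (B * Eᵀ)
    ((Matrix.isUnit_iff_isUnit_det _).2 (isUnit_iff_ne_zero.2 hdet))
  simpa using this
end

section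
/- Suppose S is meet closed and let k be the number of indices i ∈ {1,…,n} with Ψ_{S,f_i}(x_i) = 0. If k > 0, then n − k ≤ rank (S)_{f_1,…,f_n} ≤ n − 1. -/
open Finset Matrix
open scoped Classical

private lemma aux_rank_submatrix_le {m n : Type*} [Fintype m] [Fintype n] [DecidableEq m]
    [DecidableEq n] (A : Matrix n n ℂ) (f : m → n) : (A.submatrix f f).rank ≤ A.rank := by
  have h1 : ((1 : Matrix n n ℂ).submatrix f (Equiv.refl n)) * A = A.submatrix f id := by
    rw [one_submatrix_mul]; simp
  have h2 : (A.submatrix f id) * ((1 : Matrix n n ℂ).submatrix (Equiv.refl n) f)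
      = A.submatrix f f := by
    rw [mul_submatrix_one]
    simp [submatrix_submatrix]
  calc (A.submatrix f f).rank
      = ((A.submatrix f id) * ((1 : Matrix n n ℂ).submatrix (Equiv.refl n) f)).rank := by
        rw [h2]
    _ ≤ (A.submatrix f id).rank := rank_mul_le_left _ _
    _ = (((1 : Matrix n n ℂ).submatrix f (Equiv.refl n)) * A).rank := by rw [h1]
    _ ≤ A.rank := rank_mul_le_right _ _

private lemma aux_rank_le_of_det_eq_zero {n : ℕ} (A : Matrix (Fin n) (Fin n) ℂ)
    (h : A.det = 0) : A.rank ≤ n - 1 := by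
  obtain ⟨v, hv0, hv⟩ := (Matrix.exists_mulVec_eq_zero_iff).2 h
  have hker : v ∈ LinearMap.ker A.mulVecLin := by
    simpa [Matrix.mulVecLin_apply] using hv
  have hsum := LinearMap.finrank_range_add_finrank_ker A.mulVecLin
  rw [Module.finrank_fin_fun] at hsum
  have hnt : Nontrivial (LinearMap.ker A.mulVecLin) :=
    nontrivial_of_ne ⟨v, hker⟩ 0 (by simpa [Submodule.mk_eq_zero] using hv0)
  have hpos : 0 < Module.finrank ℂ (LinearMap.ker A.mulVecLin) :=
    Module.finrank_pos
  rw [Matrix.rank]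
  omega



/-- Let `S` be meet closed and `k` the number of indices `i` with
`Ψ_{S,f i}(x i) = 0`. If `k > 0`, then
`n - k ≤ rank (S)_{f₁,…,fₙ} ≤ n - 1`. -/
theorem row_adjusted_meet_matrix_rank_bounds
    {P : Type*} [Lattice P] {n : ℕ}
    (x : Fin n → P) (f : Fin n → P → ℂ) (μ : Fin n → Fin n → ℂ)
    (hxinj : Function.Injective x)
    (hxord : ∀ i j : Fin n, x i ≤ x j → i ≤ j)
    (hmeet : ∀ i j : Fin n, ∃ k : Fin n, x k = x i ⊓ x j)
    (hμ0 : ∀ i j : Fin n, ¬ x i ≤ x j → μ i j = 0)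
    (hμ : ∀ i j : Fin n, x i ≤ x j →
      (∑ v ∈ univ.filter (fun v => x i ≤ x v ∧ x v ≤ x j), μ i v) =
        if i = j then 1 else 0)
    (k : ℕ)
    (hk : k = (univ.filter (fun i : Fin n =>
      (∑ v ∈ univ.filter (fun v => x v ≤ x i), f i (x v) * μ v i) = 0)).card)
    (hkpos : 0 < k) :
    n - k ≤ (Matrix.of fun i j : Fin n => f i (x i ⊓ x j)).rank ∧
      (Matrix.of fun i j : Fin n => f i (x i ⊓ x j)).rank ≤ n - 1 := by
  set Ψ : Fin n → Fin n → ℂ :=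
    fun i m => ∑ v ∈ univ.filter (fun v => x v ≤ x m), f i (x v) * μ v m with hΨ
  set B : Matrix (Fin n) (Fin n) ℂ :=
    Matrix.of (fun i j => if x j ≤ x i then Ψ i j else 0) with hB
  set E : Matrix (Fin n) (Fin n) ℂ :=
    Matrix.of (fun i j => if x j ≤ x i then (1 : ℂ) else 0) with hE
  -- Möbius inversion
  have hinv : ∀ i m : Fin n,
      (∑ j ∈ univ.filter (fun j => x j ≤ x m), Ψ i j) = f i (x m) := by
    intro i m
    have h1 : (∑ j ∈ univ.filter (fun j => x j ≤ x m), Ψ i j)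
        = ∑ j : Fin n, ∑ v : Fin n,
            (if x j ≤ x m ∧ x v ≤ x j then f i (x v) * μ v j else 0) := by
      rw [sum_filter]
      refine Finset.sum_congr rfl fun j _ => ?_
      by_cases hj : x j ≤ x m
      · simp only [hj, if_true, true_and, hΨ, sum_filter]
      · simp [hj]
    rw [h1, Finset.sum_comm]
    have h2 : ∀ v : Fin n,
        (∑ j : Fin n, if x j ≤ x m ∧ x v ≤ x j then f i (x v) * μ v j else 0)
          = f i (x v) * (if v = m then 1 else 0) := by
      intro v
      by_cases hv : x v ≤ x m
      · have := hμ v m hv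
        rw [← this]
        rw [Finset.mul_sum]
        rw [Finset.sum_filter]
        refine Finset.sum_congr rfl fun j _ => ?_
        by_cases hc : x v ≤ x j ∧ x j ≤ x m
        · simp [hc.1, hc.2]
        · have : ¬ (x j ≤ x m ∧ x v ≤ x j) := fun h => hc ⟨h.2, h.1⟩
          simp [hc, this]
      · have hvm : v ≠ m := fun h => hv (h ▸ le_refl (x v))
        simp only [hvm, if_false, mul_zero]
        refine Finset.sum_eq_zero fun j _ => ?_
        have : ¬ (x j ≤ x m ∧ x v ≤ x j) := fun h => hv (h.2.trans h.1)
        simp [this]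
    simp only [h2]
    simp [mul_ite]
  -- factorization
  have hfact : (Matrix.of fun i j : Fin n => f i (x i ⊓ x j)) = B * Eᵀ := by
    ext i j
    obtain ⟨m, hm⟩ := hmeet i j
    simp only [Matrix.mul_apply, Matrix.of_apply, hB, hE, Matrix.transpose_apply,
      Matrix.of_apply]
    have : ∀ l : Fin n,
        (if x l ≤ x i then Ψ i l else 0) * (if x l ≤ x j then (1:ℂ) else 0)
          = if x l ≤ x m then Ψ i l else 0 := by
      intro l
      by_cases h1 : x l ≤ x i <;> by_cases h2 : x l ≤ x j
      · have : x l ≤ x m := by rw [hm]; exact le_inf h1 h2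
        simp [h1, h2, this]
      · have : ¬ x l ≤ x m := fun h => h2 ((hm ▸ h).trans inf_le_right)
        simp [h1, h2, this]
      · have : ¬ x l ≤ x m := fun h => h1 ((hm ▸ h).trans inf_le_left)
        simp [h1, h2, this]
      · have : ¬ x l ≤ x m := fun h => h1 ((hm ▸ h).trans inf_le_left)
        simp [h1, h2, this]
    simp only [this]
    rw [← Finset.sum_filter, hinv i m, hm]
  -- E is unitriangular
  have hEdet : Eᵀ.det = 1 := by
    rw [Matrix.det_transpose]
    have htri : E.BlockTriangular OrderDual.toDual := by
      intro i j hij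
      have : ¬ x j ≤ x i := fun h => absurd (hxord j i h) (not_le.mpr hij)
      simp [hE, this]
    rw [Matrix.det_of_lowerTriangular E htri]
    simp [hE]
  have hrankBE : (Matrix.of fun i j : Fin n => f i (x i ⊓ x j)).rank = B.rank := by
    rw [hfact]
    exact Matrix.rank_mul_eq_left_of_isUnit_det Eᵀ B (by rw [hEdet]; exact isUnit_one)
  -- B is lower triangular
  have hBtri : B.BlockTriangular OrderDual.toDual := by
    intro i j hij
    have : ¬ x j ≤ x i := fun h => absurd (hxord j i h) (not_le.mpr hij)
    simp [hB, this]
  constructor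
  · -- lower bound
    rw [hrankBE]
    set T : Finset (Fin n) := univ.filter (fun i : Fin n => ¬ Ψ i i = 0) with hT
    have hkn : k + T.card = n := by
      rw [hk, hT]
      have := Finset.card_filter_add_card_filter_not
        (s := (univ : Finset (Fin n))) (p := fun i : Fin n => Ψ i i = 0)
      simpa [hΨ, Finset.card_univ] using this
    have hTcard : T.card = n - k := by omega
    let g : Fin (n - k) → Fin n := fun a => (T.orderIsoOfFin hTcard a : Fin n)
    have hgmono : StrictMono g := fun a b h =>
      Subtype.coe_lt_coe.mpr ((T.orderIsoOfFin hTcard).strictMono h)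
    have hgT : ∀ a, g a ∈ T := fun a => (T.orderIsoOfFin hTcard a).2
    set C : Matrix (Fin (n - k)) (Fin (n - k)) ℂ := B.submatrix g g with hC
    have hCtri : C.BlockTriangular OrderDual.toDual := by
      intro a b hab
      exact hBtri (hgmono hab)
    have hCdet : C.det ≠ 0 := by
      rw [Matrix.det_of_lowerTriangular C hCtri]
      refine Finset.prod_ne_zero_iff.mpr fun a _ => ?_
      have hga := hgT a
      rw [hT, Finset.mem_filter] at hga
      simp only [hC, Matrix.submatrix_apply, hB, Matrix.of_apply, le_refl, if_true]
      exact hga.2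
    have hCrank : C.rank = n - k := by
      rw [Matrix.rank_of_isUnit C ((Matrix.isUnit_iff_isUnit_det C).mpr (Ne.isUnit hCdet))]
      simp
    calc n - k = C.rank := hCrank.symm
      _ ≤ B.rank := aux_rank_submatrix_le B g
  · -- upper bound
    rw [hrankBE]
    apply aux_rank_le_of_det_eq_zero
    rw [Matrix.det_of_lowerTriangular B hBtri]
    rw [hk] at hkpos
    obtain ⟨i₀, hi₀⟩ := Finset.card_pos.mp hkpos
    refine Finset.prod_eq_zero (Finset.mem_univ i₀) ?_
    simp only [hB, Matrix.of_apply, le_refl, if_true]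
    exact (Finset.mem_filter.mp hi₀).2
end

section
/- Suppose S is meet closed and f_1 = f_2 = ⋯ = f_n = f for a single function f : P → ℂ, so that (S)_f is the ordinary meet matrix with (i,j) entry f(x_i ∧ x_j). If k is the number of indices i ∈ {1,…,n} with Ψ_{S,f}(x_i) = 0, then rank (S)_f = n − k. -/
open Finset Matrix
open scoped Classical

/-- For a meet closed set `S` and a single function `f : P → ℂ`, the ordinary
meet matrix `(S)_f` has rank `n - k`, where `k` is the number of indices `i`
with `Ψ_{S,f}(x i) = 0`. -/
theorem meet_matrix_rank_eq
    {P : Type*} [Lattice P] {n : ℕ}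
    (x : Fin n → P) (f : P → ℂ) (μ : Fin n → Fin n → ℂ)
    (hxinj : Function.Injective x)
    (hxord : ∀ i j : Fin n, x i ≤ x j → i ≤ j)
    (hmeet : ∀ i j : Fin n, ∃ k : Fin n, x k = x i ⊓ x j)
    (hμ0 : ∀ i j : Fin n, ¬ x i ≤ x j → μ i j = 0)
    (hμ : ∀ i j : Fin n, x i ≤ x j →
      (∑ v ∈ univ.filter (fun v => x i ≤ x v ∧ x v ≤ x j), μ i v) =
        if i = j then 1 else 0)
    (k : ℕ)
    (hk : k = (univ.filter (fun i : Fin n =>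
      (∑ v ∈ univ.filter (fun v => x v ≤ x i), f (x v) * μ v i) = 0)).card) :
    (Matrix.of fun i j : Fin n => f (x i ⊓ x j)).rank = n - k := by
  set Ψ : Fin n → ℂ :=
    fun i => ∑ v ∈ univ.filter (fun v => x v ≤ x i), f (x v) * μ v i with hΨ
  set E : Matrix (Fin n) (Fin n) ℂ :=
    Matrix.of (fun i j : Fin n => if x j ≤ x i then (1 : ℂ) else 0) with hE
  -- Möbius inversion: summing Ψ below x m recovers f (x m)
  have key : ∀ m : Fin n,
      (∑ v ∈ univ.filter (fun v => x v ≤ x m), Ψ v) = f (x m) := by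
    intro m
    have step : ∀ v : Fin n,
        (if x v ≤ x m then Ψ v else 0)
          = ∑ w : Fin n, (if x w ≤ x v ∧ x v ≤ x m then f (x w) * μ w v else 0) := by
      intro v
      split_ifs with h
      · simp only [hΨ]
        rw [Finset.sum_filter]
        refine Finset.sum_congr rfl fun w _ => ?_
        by_cases hw : x w ≤ x v <;> simp [hw, h]
      · exact (Finset.sum_eq_zero fun w _ => by simp [h]).symm
    rw [Finset.sum_filter]
    calc (∑ v : Fin n, if x v ≤ x m then Ψ v else 0)
        = ∑ v : Fin n, ∑ w : Fin n,
            (if x w ≤ x v ∧ x v ≤ x m then f (x w) * μ w v else 0) :=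
          Finset.sum_congr rfl fun v _ => step v
      _ = ∑ w : Fin n, ∑ v : Fin n,
            (if x w ≤ x v ∧ x v ≤ x m then f (x w) * μ w v else 0) := Finset.sum_comm
      _ = ∑ w : Fin n, (if w = m then f (x w) else 0) := ?_
      _ = f (x m) := by simp
    refine Finset.sum_congr rfl fun w _ => ?_
    by_cases hwm : x w ≤ x m
    · calc (∑ v : Fin n, if x w ≤ x v ∧ x v ≤ x m then f (x w) * μ w v else 0)
          = f (x w) * ∑ v ∈ univ.filter (fun v => x w ≤ x v ∧ x v ≤ x m), μ w v := by
            rw [Finset.mul_sum, Finset.sum_filter]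
        _ = f (x w) * (if w = m then 1 else 0) := by rw [hμ w m hwm]
        _ = (if w = m then f (x w) else 0) := by
            by_cases h : w = m <;> simp [h]
    · rw [if_neg (fun h => hwm (by rw [h]))]
      exact Finset.sum_eq_zero fun v _ => by
        rw [if_neg]; rintro ⟨h1, h2⟩; exact hwm (h1.trans h2)
  -- factorization of the meet matrix
  have hEq : (Matrix.of fun i j : Fin n => f (x i ⊓ x j))
      = E * Matrix.diagonal Ψ * Eᵀ := by
    ext i j
    obtain ⟨m, hm⟩ := hmeet i j
    show f (x i ⊓ x j) = (E * Matrix.diagonal Ψ * Eᵀ) i j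
    rw [← hm, ← key m, Finset.sum_filter, Matrix.mul_apply]
    refine Finset.sum_congr rfl fun v _ => ?_
    have hv : x v ≤ x m ↔ (x v ≤ x i ∧ x v ≤ x j) := by rw [hm, le_inf_iff]
    simp only [Matrix.mul_diagonal, Matrix.transpose_apply, hE, Matrix.of_apply]
    by_cases h1 : x v ≤ x i <;> by_cases h2 : x v ≤ x j <;>
      simp [h1, h2, hv]
  -- E is (anti) triangular with unit determinant
  have htri : Eᵀ.BlockTriangular id := by
    intro i j hij
    show (if x i ≤ x j then (1 : ℂ) else 0) = 0
    rw [if_neg]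
    exact fun h => absurd (hxord i j h) (not_le.mpr hij)
  have hdetE : IsUnit E.det := by
    have : Eᵀ.det = 1 := by
      rw [Matrix.det_of_upperTriangular htri]
      refine Finset.prod_eq_one fun i _ => ?_
      show (if x i ≤ x i then (1 : ℂ) else 0) = 1
      simp
    rw [← Matrix.det_transpose, this]
    exact isUnit_one
  have hdetET : IsUnit Eᵀ.det := by rwa [Matrix.det_transpose]
  rw [hEq, Matrix.rank_mul_eq_left_of_isUnit_det Eᵀ (E * Matrix.diagonal Ψ) hdetET,
    Matrix.rank_mul_eq_right_of_isUnit_det E (Matrix.diagonal Ψ) hdetE,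
    Matrix.rank_diagonal]
  -- counting
  rw [Fintype.card_subtype, hk]
  have hset : (univ.filter (fun i : Fin n =>
      (∑ v ∈ univ.filter (fun v => x v ≤ x i), f (x v) * μ v i) = 0))
      = univ.filter (fun i => Ψ i = 0) := by
    simp only [hΨ]
  rw [hset]
  have : (univ.filter fun i : Fin n => Ψ i ≠ 0)
      = univ \ univ.filter (fun i => Ψ i = 0) := by
    rw [← Finset.filter_not]
  rw [this, Finset.card_sdiff_of_subset (Finset.filter_subset _ _)]
  simp
end

section
/- If the set S is meet closed, then det (S)_{f_1,…,f_n} = Π_{i=1}^{n} Ψ_{S,f_i}(x_i) = Π_{i=1}^{n} Σ_{x_j ≤ x_i} f_i(x_j) μ_S(x_j, x_i). -/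
open Finset Matrix
open scoped Classical

/-- **Determinant formula (Lindström).** If `S` is meet closed, then
`det (S)_{f₁,…,fₙ} = ∏ i, Ψ_{S,f i}(x i) = ∏ i, ∑_{x j ≤ x i} f i (x j) μ_S(x j, x i)`. -/
theorem row_adjusted_meet_matrix_det
    {P : Type*} [Lattice P] {n : ℕ}
    (x : Fin n → P) (f : Fin n → P → ℂ) (μ : Fin n → Fin n → ℂ)
    (hxinj : Function.Injective x)
    (hxord : ∀ i j : Fin n, x i ≤ x j → i ≤ j)
    (hmeet : ∀ i j : Fin n, ∃ k : Fin n, x k = x i ⊓ x j)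
    (hμ0 : ∀ i j : Fin n, ¬ x i ≤ x j → μ i j = 0)
    (hμ : ∀ i j : Fin n, x i ≤ x j →
      (∑ v ∈ univ.filter (fun v => x i ≤ x v ∧ x v ≤ x j), μ i v) =
        if i = j then 1 else 0) :
    (Matrix.of fun i j : Fin n => f i (x i ⊓ x j)).det =
      ∏ i : Fin n, ∑ j ∈ univ.filter (fun j => x j ≤ x i), f i (x j) * μ j i := by
  set Ψ : Fin n → Fin n → ℂ :=
    fun i k => ∑ v ∈ univ.filter (fun v => x v ≤ x k), f i (x v) * μ v k with hΨ
  set A : Matrix (Fin n) (Fin n) ℂ :=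
    Matrix.of (fun i k => if x k ≤ x i then Ψ i k else 0) with hA
  set B : Matrix (Fin n) (Fin n) ℂ :=
    Matrix.of (fun k j : Fin n => if x k ≤ x j then (1 : ℂ) else 0) with hB
  -- key: for any m, summing Ψ i k over k with x k ≤ x m gives f i (x m)
  have key : ∀ (i m : Fin n),
      (∑ k ∈ univ.filter (fun k => x k ≤ x m), Ψ i k) = f i (x m) := by
    intro i m
    have h1 : (∑ k ∈ univ.filter (fun k => x k ≤ x m), Ψ i k)
        = ∑ k : Fin n, ∑ v : Fin n,
            (if x v ≤ x k ∧ x k ≤ x m then f i (x v) * μ v k else 0) := by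
      rw [Finset.sum_filter]
      refine Finset.sum_congr rfl fun k _ => ?_
      by_cases hk : x k ≤ x m
      · simp [hk, hΨ, Finset.sum_filter]
      · simp [hk]
    rw [h1, Finset.sum_comm]
    have h2 : ∀ v : Fin n,
        (∑ k : Fin n, (if x v ≤ x k ∧ x k ≤ x m then f i (x v) * μ v k else 0))
          = f i (x v) * (if v = m then 1 else 0) := by
      intro v
      by_cases hv : x v ≤ x m
      · rw [← hμ v m hv, Finset.mul_sum, Finset.sum_filter]
      · have : ∀ k : Fin n, (if x v ≤ x k ∧ x k ≤ x m then f i (x v) * μ v k else 0) = 0 := by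
          intro k
          by_cases hc : x v ≤ x k ∧ x k ≤ x m
          · exact absurd (hc.1.trans hc.2) hv
          · simp [hc]
        have hne : v ≠ m := fun h => hv (by rw [h])
        simp [this, hne]
    simp only [h2]
    simp
  have hMAB : (Matrix.of fun i j : Fin n => f i (x i ⊓ x j)) = A * B := by
    ext i j
    obtain ⟨m, hm⟩ := hmeet i j
    rw [Matrix.mul_apply]
    have hk : ∀ k : Fin n, A i k * B k j = if x k ≤ x m then Ψ i k else 0 := by
      intro k
      simp only [hA, hB, Matrix.of_apply]
      by_cases h1 : x k ≤ x i <;> by_cases h2 : x k ≤ x j <;>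
        simp [h1, h2, hm, le_inf_iff, mul_comm]
    simp only [hk, ← Finset.sum_filter]
    rw [Matrix.of_apply, ← hm, key i m]
  rw [hMAB, Matrix.det_mul]
  have hAdet : A.det = ∏ i : Fin n, Ψ i i := by
    rw [Matrix.det_of_lowerTriangular]
    · exact Finset.prod_congr rfl fun i _ => by simp [hA]
    · intro i k h
      simp only [hA, Matrix.of_apply, ite_eq_right_iff]
      intro hk
      exact absurd (hxord k i hk) (not_le.mpr h)
  have hBdet : B.det = 1 := by
    rw [Matrix.det_of_upperTriangular]
    · simp [hB]
    · intro k j h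
      simp only [hB, Matrix.of_apply, ite_eq_right_iff]
      intro hk
      exact absurd (hxord k j hk) (not_le.mpr h)
  rw [hAdet, hBdet, mul_one]
end

section
/- The determinant of the row-adjusted GCD matrix of the set {1, 2, …, n} satisfies det (f_i(gcd(i,j)))_{i,j=1}^{n} = Π_{i=1}^{n} Σ_{j | i} f_i(j) μ(i/j) = Π_{i=1}^{n} (f_i ∗ μ)(i). -/
/-!
Writing `g i := f i ∗ μ`, Möbius inversion gives `f i m = ∑_{d ∣ m} g i d`, and since the common
divisors of `i` and `j` are the divisors of `gcd i j`,
`f i (gcd i j) = ∑_{d ≤ n} [d ∣ i] g i d · [d ∣ j]`.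
So the matrix factors as `A * Dᵀ` with `A` lower triangular with diagonal `g i i` and `D`
unitriangular, both being supported on the divisibility relation.
-/

open Finset Matrix ArithmeticFunction

@[to_additive]
theorem Fin.prod_univ_val_succ_eq_prod_Icc {M : Type*} [CommMonoid M] (n : ℕ) (h : ℕ → M) :
    ∏ i : Fin n, h (i + 1) = ∏ i ∈ Icc 1 n, h i := by
  rw [Fin.prod_univ_eq_prod_range (fun i => h (i + 1)), range_eq_Ico, prod_Ico_add' h]
  rfl

theorem Fin.sum_univ_ite_add_one_dvd {M : Type*} [AddCommMonoid M] {n m : ℕ} (hm : m ≠ 0)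
    (hmn : m ≤ n) (h : ℕ → M) :
    ∑ d : Fin n, (if (d : ℕ) + 1 ∣ m then h (d + 1) else 0) = ∑ d ∈ m.divisors, h d := by
  rw [Fin.sum_univ_val_succ_eq_sum_Icc n (fun d => if d ∣ m then h d else 0), ← sum_filter]
  congr 1
  ext d
  simp only [mem_filter, mem_Icc, Nat.mem_divisors]
  refine ⟨fun hd => ⟨hd.2, hm⟩, fun hd => ⟨⟨?_, ?_⟩, hd.1⟩⟩
  · exact Nat.pos_of_mem_divisors (Nat.mem_divisors.mpr hd)
  · exact (Nat.divisor_le (Nat.mem_divisors.mpr hd)).trans hmn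

theorem sum_divisors_sum_divisors_mul_moebius {R : Type*} [Ring R] (F : ℕ → R) {m : ℕ}
    (hm : m ≠ 0) :
    ∑ d ∈ m.divisors, ∑ j ∈ d.divisors, F j * (moebius (d / j) : R) = F m := by
  refine sum_eq_iff_sum_smul_moebius_eq.mpr (fun d _ => ?_) m (Nat.pos_of_ne_zero hm)
  rw [Nat.sum_divisorsAntidiagonal' (fun a b => moebius a • F b)]
  simp only [zsmul_eq_mul, (Int.cast_commute _ _).eq]

section DivisorMatrix

variable {R : Type*}

/-- Row and column `k : Fin n` stand for the integer `k + 1`. -/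
def divisorMatrix [Zero R] (n : ℕ) (g : ℕ → ℕ → R) : Matrix (Fin n) (Fin n) R :=
  of fun i d => if (d : ℕ) + 1 ∣ i + 1 then g (i + 1) (d + 1) else 0

theorem divisorMatrix_isLowerTriangular [Zero R] (n : ℕ) (g : ℕ → ℕ → R) :
    (divisorMatrix n g).IsLowerTriangular := fun i d hid => by
  have hid : (i : ℕ) < d := hid
  refine if_neg fun hdvd => ?_
  have := Nat.le_of_dvd (Nat.succ_pos i) hdvd
  omega

variable [CommRing R]

theorem det_divisorMatrix (n : ℕ) (g : ℕ → ℕ → R) :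
    (divisorMatrix n g).det = ∏ i ∈ Icc 1 n, g i i := by
  rw [det_of_isLowerTriangular _ (divisorMatrix_isLowerTriangular n g),
    ← Fin.prod_univ_val_succ_eq_prod_Icc]
  exact prod_congr rfl fun i _ => if_pos dvd_rfl

theorem gcd_matrix_eq_divisorMatrix_mul {n : ℕ} {f g : ℕ → ℕ → R}
    (hfg : ∀ i m, m ≠ 0 → ∑ d ∈ m.divisors, g i d = f i m) :
    of (fun i j : Fin n => f (i + 1) (Nat.gcd (i + 1) (j + 1))) =
      divisorMatrix n g * (divisorMatrix n fun _ _ => 1)ᵀ := by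
  ext i j
  have hgcd : Nat.gcd (i + 1) (j + 1) ≠ 0 := Nat.gcd_ne_zero_left (Nat.succ_ne_zero i)
  have hgcd_le : Nat.gcd (i + 1) (j + 1) ≤ n := (Nat.gcd_le_left _ (Nat.succ_pos i)).trans i.2
  simp only [Matrix.mul_apply, transpose_apply, divisorMatrix, of_apply, ite_zero_mul_ite_zero,
    mul_one, ← Nat.dvd_gcd_iff]
  rw [Fin.sum_univ_ite_add_one_dvd hgcd hgcd_le, hfg _ _ hgcd]

end DivisorMatrix

/-- **Determinant of the row-adjusted GCD matrix (Bege's problem, part 2).**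
`det (f i (gcd i j))_{i,j=1}^{n} = ∏_{i=1}^{n} ∑_{j ∣ i} f i j * μ(i / j)
 = ∏_{i=1}^{n} (f i ∗ μ)(i)`. -/
theorem row_adjusted_gcd_matrix_det (n : ℕ) (f : ℕ → ℕ → ℂ) :
    (Matrix.of fun i j : Fin n =>
        f (i.1 + 1) (Nat.gcd (i.1 + 1) (j.1 + 1))).det =
      ∏ i ∈ Finset.Icc 1 n, ∑ j ∈ Nat.divisors i, f i j * (moebius (i / j) : ℂ) := by
  rw [gcd_matrix_eq_divisorMatrix_mul fun i m hm => sum_divisors_sum_divisors_mul_moebius (f i) hm,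
    det_mul, det_transpose, det_divisorMatrix, det_divisorMatrix, prod_const_one, mul_one]
end

section
/- If the set S is meet closed, then the row-adjusted meet matrix (S)_{f_1,…,f_n} is invertible if and only if Ψ_{S,f_i}(x_i) ≠ 0 for all i = 1,…,n. -/
open Finset Matrix
open scoped Classical

/-- If `S` is meet closed, then the row-adjusted meet matrix `(S)_{f₁,…,fₙ}`
is invertible iff `Ψ_{S,f i}(x i) ≠ 0` for all `i`. -/
theorem row_adjusted_meet_matrix_isUnit_iff
    {P : Type*} [Lattice P] {n : ℕ}
    (x : Fin n → P) (f : Fin n → P → ℂ) (μ : Fin n → Fin n → ℂ)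
    (hxinj : Function.Injective x)
    (hxord : ∀ i j : Fin n, x i ≤ x j → i ≤ j)
    (hmeet : ∀ i j : Fin n, ∃ k : Fin n, x k = x i ⊓ x j)
    (hμ0 : ∀ i j : Fin n, ¬ x i ≤ x j → μ i j = 0)
    (hμ : ∀ i j : Fin n, x i ≤ x j →
      (∑ v ∈ univ.filter (fun v => x i ≤ x v ∧ x v ≤ x j), μ i v) =
        if i = j then 1 else 0) :
    IsUnit (Matrix.of fun i j : Fin n => f i (x i ⊓ x j)) ↔
      ∀ i : Fin n,
        (∑ v ∈ univ.filter (fun v => x v ≤ x i), f i (x v) * μ v i) ≠ 0 := by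
  classical
  set Ψ : Fin n → Fin n → ℂ :=
    fun i k => ∑ v ∈ univ.filter (fun v => x v ≤ x k), f i (x v) * μ v k with hΨ
  set A : Matrix (Fin n) (Fin n) ℂ :=
    Matrix.of (fun i k => if x k ≤ x i then Ψ i k else 0) with hA
  set E : Matrix (Fin n) (Fin n) ℂ :=
    Matrix.of (fun j k : Fin n => if x k ≤ x j then (1 : ℂ) else 0) with hE
  -- Ψ with sum over all of univ (terms outside the filter vanish by hμ0)
  have hΨfull : ∀ i k, Ψ i k = ∑ v, f i (x v) * μ v k := by
    intro i k
    rw [hΨ]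
    refine Finset.sum_subset (filter_subset _ _) ?_
    intro v _ hv
    simp only [mem_filter, mem_univ, true_and] at hv
    rw [hμ0 v k hv, mul_zero]
  -- factorization
  have hfact : (Matrix.of fun i j : Fin n => f i (x i ⊓ x j)) = A * Eᵀ := by
    ext i j
    obtain ⟨m, hm⟩ := hmeet i j
    have key : ∀ v : Fin n,
        (∑ k ∈ univ.filter (fun k => x v ≤ x k ∧ x k ≤ x m), μ v k)
          = if v = m then 1 else 0 := by
      intro v
      by_cases hvm : x v ≤ x m
      · exact hμ v m hvm
      · rw [if_neg, Finset.sum_eq_zero]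
        · intro k hk
          simp only [mem_filter, mem_univ, true_and] at hk
          exact absurd (hk.1.trans hk.2) hvm
        · rintro rfl; exact hvm le_rfl
    have hterm : ∀ k, A i k * Eᵀ k j = if x k ≤ x m then Ψ i k else 0 := by
      intro k
      simp only [hA, hE, Matrix.transpose_apply, Matrix.of_apply]
      have : x k ≤ x m ↔ x k ≤ x i ∧ x k ≤ x j := by rw [hm, le_inf_iff]
      by_cases h1 : x k ≤ x i <;> by_cases h2 : x k ≤ x j <;>
        simp [h1, h2, this]
    calc (Matrix.of fun i j : Fin n => f i (x i ⊓ x j)) i j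
        = f i (x m) := by rw [Matrix.of_apply, hm]
      _ = ∑ v, f i (x v) * (if v = m then 1 else 0) := by
          simp [Finset.sum_ite_eq]
      _ = ∑ v, f i (x v) *
            (∑ k ∈ univ.filter (fun k => x v ≤ x k ∧ x k ≤ x m), μ v k) := by
          refine Finset.sum_congr rfl fun v _ => by rw [key v]
      _ = ∑ v, ∑ k ∈ univ.filter (fun k => x k ≤ x m), f i (x v) * μ v k := by
          refine Finset.sum_congr rfl fun v _ => ?_
          rw [Finset.mul_sum]
          refine Finset.sum_subset ?_ ?_
          · intro k hk
            simp only [mem_filter, mem_univ, true_and] at hk ⊢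
            exact hk.2
          · intro k hkm hk
            simp only [mem_filter, mem_univ, true_and, not_and] at hk hkm
            rw [hμ0 v k (fun h => hk h hkm), mul_zero]
      _ = ∑ k ∈ univ.filter (fun k => x k ≤ x m), ∑ v, f i (x v) * μ v k :=
          Finset.sum_comm
      _ = ∑ k ∈ univ.filter (fun k => x k ≤ x m), Ψ i k := by
          refine Finset.sum_congr rfl fun k _ => (hΨfull i k).symm
      _ = ∑ k, (if x k ≤ x m then Ψ i k else 0) := by
          rw [Finset.sum_filter]
      _ = ∑ k, A i k * Eᵀ k j := by
          refine Finset.sum_congr rfl fun k _ => (hterm k).symm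
      _ = (A * Eᵀ) i j := by rw [Matrix.mul_apply]
  -- triangularity
  have hAtri : A.BlockTriangular OrderDual.toDual := by
    intro i j hij
    have hij' : i < j := hij
    rw [hA, Matrix.of_apply, if_neg]
    intro h
    exact absurd (hxord _ _ h) (not_le.mpr hij')
  have hEtri : E.BlockTriangular OrderDual.toDual := by
    intro i j hij
    have hij' : i < j := hij
    rw [hE, Matrix.of_apply, if_neg]
    intro h
    exact absurd (hxord _ _ h) (not_le.mpr hij')
  have hdetE : E.det = 1 := by
    rw [Matrix.det_of_lowerTriangular E hEtri]
    simp [hE]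
  have hdetA : A.det = ∏ i, Ψ i i := by
    rw [Matrix.det_of_lowerTriangular A hAtri]
    simp [hA]
  have hdet : (Matrix.of fun i j : Fin n => f i (x i ⊓ x j)).det = ∏ i, Ψ i i := by
    rw [hfact, Matrix.det_mul, Matrix.det_transpose, hdetE, hdetA, mul_one]
  rw [Matrix.isUnit_iff_isUnit_det, hdet, isUnit_iff_ne_zero, Finset.prod_ne_zero_iff]
  simp [hΨ]
end

section
/- Suppose the set S is meet closed and Ψ_{S,f_i}(x_i) ≠ 0 for all i = 1,…,n. Then the inverse of (S)_{f_1,…,f_n} is the n×n matrix B = (b_{ij}) with b_{ij} = Σ_{k=j}^{n} μ_S(x_i, x_k) θ_{kj}, where for each fixed j the numbers θ_{jj}, θ_{j+1,j}, …, θ_{nj} are defined recursively by θ_{jj} = 1/Ψ_{S,f_j}(x_j) and, for k > j, θ_{kj} = −(1/Ψ_{S,f_k}(x_k)) Σ_{u=j}^{k−1} (E_S)_{ku} Ψ_{S,f_k}(x_u) θ_{uj}. -/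
open Finset Matrix
open scoped Classical

/-- **Inverse formula.** Suppose `S` is meet closed and `Ψ_{S,f i}(x i) ≠ 0`
for all `i`. With `θ` defined recursively by `θ j j = 1 / Ψ_{S,f j}(x j)` and,
for `k > j`,
`θ k j = -(1 / Ψ_{S,f k}(x k)) * ∑_{u=j}^{k-1} (E_S)_{k u} Ψ_{S,f k}(x u) θ u j`,
the inverse of `(S)_{f₁,…,fₙ}` is the matrix `B` with
`B i j = ∑_{k=j}^{n} μ_S(x i, x k) θ k j`. -/
theorem row_adjusted_meet_matrix_inverse
    {P : Type*} [Lattice P] {n : ℕ}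
    (x : Fin n → P) (f : Fin n → P → ℂ) (μ : Fin n → Fin n → ℂ)
    (Ψ : Fin n → Fin n → ℂ) (θ : Fin n → Fin n → ℂ)
    (hxinj : Function.Injective x)
    (hxord : ∀ i j : Fin n, x i ≤ x j → i ≤ j)
    (hmeet : ∀ i j : Fin n, ∃ k : Fin n, x k = x i ⊓ x j)
    (hμ0 : ∀ i j : Fin n, ¬ x i ≤ x j → μ i j = 0)
    (hμ : ∀ i j : Fin n, x i ≤ x j →
      (∑ v ∈ univ.filter (fun v => x i ≤ x v ∧ x v ≤ x j), μ i v) =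
        if i = j then 1 else 0)
    (hΨ : ∀ i k : Fin n,
      Ψ i k = ∑ v ∈ univ.filter (fun v => x v ≤ x k), f i (x v) * μ v k)
    (hΨne : ∀ i : Fin n, Ψ i i ≠ 0)
    (hθdiag : ∀ j : Fin n, θ j j = 1 / Ψ j j)
    (hθ : ∀ j k : Fin n, j < k →
      θ k j = -(1 / Ψ k k) *
        ∑ u ∈ Finset.Ico j k, (if x u ≤ x k then (1 : ℂ) else 0) * Ψ k u * θ u j) :
    (Matrix.of fun i j : Fin n => f i (x i ⊓ x j)) *
        (Matrix.of fun i j : Fin n => ∑ k ∈ Finset.Ici j, μ i k * θ k j) = 1 ∧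
    (Matrix.of fun i j : Fin n => ∑ k ∈ Finset.Ici j, μ i k * θ k j) *
        (Matrix.of fun i j : Fin n => f i (x i ⊓ x j)) = 1 := by
  classical
  set L : Matrix (Fin n) (Fin n) ℂ :=
    Matrix.of (fun k u : Fin n => if x u ≤ x k then Ψ k u else 0) with hLdef
  set Et : Matrix (Fin n) (Fin n) ℂ :=
    Matrix.of (fun u j : Fin n => if x u ≤ x j then (1 : ℂ) else 0) with hEtdef
  set M : Matrix (Fin n) (Fin n) ℂ := Matrix.of μ with hMdef
  set T : Matrix (Fin n) (Fin n) ℂ :=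
    Matrix.of (fun k j : Fin n => if j ≤ k then θ k j else 0) with hTdef
  -- Möbius inversion: f i (x m) = ∑_{x v ≤ x m} Ψ i v
  have hinv : ∀ i m : Fin n,
      (∑ v ∈ univ.filter (fun v => x v ≤ x m), Ψ i v) = f i (x m) := by
    intro i m
    have h1 : (∑ v ∈ univ.filter (fun v => x v ≤ x m), Ψ i v)
        = ∑ v : Fin n, ∑ w : Fin n,
            if x v ≤ x m ∧ x w ≤ x v then f i (x w) * μ w v else 0 := by
      rw [Finset.sum_filter]
      refine Finset.sum_congr rfl fun v _ => ?_
      by_cases h : x v ≤ x m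
      · rw [if_pos h, hΨ i v, Finset.sum_filter]
        refine Finset.sum_congr rfl fun w _ => ?_
        by_cases hw : x w ≤ x v <;> simp [h, hw]
      · simp [h]
    rw [h1, Finset.sum_comm]
    have h2 : ∀ w : Fin n,
        (∑ v : Fin n, if x v ≤ x m ∧ x w ≤ x v then f i (x w) * μ w v else 0)
          = f i (x w) * (if w = m then 1 else 0) := by
      intro w
      by_cases hw : x w ≤ x m
      · rw [← hμ w m hw, Finset.mul_sum, Finset.sum_filter]
        refine Finset.sum_congr rfl fun v _ => ?_
        by_cases h1 : x v ≤ x m <;> by_cases h2 : x w ≤ x v <;>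
          simp [h1, h2, and_comm]
      · have hne : w ≠ m := fun h => hw (h ▸ le_refl _)
        rw [if_neg hne, mul_zero]
        refine Finset.sum_eq_zero fun v _ => ?_
        rw [if_neg]
        rintro ⟨hvm, hwv⟩
        exact hw (hwv.trans hvm)
    rw [Finset.sum_congr rfl fun w _ => h2 w]
    simp [mul_ite]
  -- Factorization of the meet matrix
  have hA : (Matrix.of fun i j : Fin n => f i (x i ⊓ x j)) = L * Et := by
    ext i j
    obtain ⟨m, hm⟩ := hmeet i j
    rw [Matrix.mul_apply]
    simp only [hLdef, hEtdef, Matrix.of_apply]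
    have : ∀ u : Fin n,
        (if x u ≤ x i then Ψ i u else 0) * (if x u ≤ x j then (1 : ℂ) else 0)
          = if x u ≤ x m then Ψ i u else 0 := by
      intro u
      have : x u ≤ x m ↔ x u ≤ x i ∧ x u ≤ x j := by rw [hm, le_inf_iff]
      by_cases h1 : x u ≤ x i <;> by_cases h2 : x u ≤ x j <;>
        simp [h1, h2, this]
    rw [Finset.sum_congr rfl fun u _ => this u, ← Finset.sum_filter, hinv i m, hm]
  -- B = M * T
  have hB : (Matrix.of fun i j : Fin n => ∑ k ∈ Finset.Ici j, μ i k * θ k j)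
      = M * T := by
    ext i j
    rw [Matrix.mul_apply]
    simp only [hMdef, hTdef, Matrix.of_apply]
    have h1 : ∀ k : Fin n, μ i k * (if j ≤ k then θ k j else 0)
        = if j ≤ k then μ i k * θ k j else 0 := by
      intro k; by_cases h : j ≤ k <;> simp [h]
    rw [Finset.sum_congr rfl fun k _ => h1 k, ← Finset.sum_filter]
    congr 1
    ext k
    simp
  -- L * T = 1
  have hLT : L * T = 1 := by
    ext k j
    rw [Matrix.mul_apply]
    simp only [hLdef, hTdef, Matrix.of_apply]
    have h1 : ∀ u : Fin n,
        (if x u ≤ x k then Ψ k u else 0) * (if j ≤ u then θ u j else 0)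
          = if j ≤ u ∧ x u ≤ x k then Ψ k u * θ u j else 0 := by
      intro u; by_cases h1 : x u ≤ x k <;> by_cases h2 : j ≤ u <;>
        simp [h1, h2]
    rw [Finset.sum_congr rfl fun u _ => h1 u]
    rcases lt_trichotomy k j with hkj | hkj | hkj
    · rw [Matrix.one_apply_ne (ne_of_lt hkj)]
      refine Finset.sum_eq_zero fun u _ => ?_
      rw [if_neg]
      rintro ⟨hju, hux⟩
      exact absurd (hju.trans (hxord u k hux)) (not_le_of_gt hkj)
    · subst hkj
      rw [Matrix.one_apply_eq]
      rw [Finset.sum_eq_single k]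
      · rw [if_pos ⟨le_refl k, le_refl (x k)⟩, hθdiag k, mul_one_div,
          div_self (hΨne k)]
      · intro u _ hu
        rw [if_neg]
        rintro ⟨hju, hux⟩
        exact hu (le_antisymm (hxord u k hux) hju)
      · intro h; exact absurd (Finset.mem_univ k) h
    · -- j < k
      rw [Matrix.one_apply_ne (ne_of_gt hkj)]
      have hsub : (∑ u : Fin n, if j ≤ u ∧ x u ≤ x k then Ψ k u * θ u j else 0)
          = ∑ u ∈ Finset.Icc j k, if j ≤ u ∧ x u ≤ x k then Ψ k u * θ u j else 0 := by
        refine (Finset.sum_subset (Finset.subset_univ _) fun u _ hu => ?_).symm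
        rw [if_neg]
        rintro ⟨hju, hux⟩
        exact hu (Finset.mem_Icc.mpr ⟨hju, hxord u k hux⟩)
      rw [hsub, ← Finset.Ico_insert_right (le_of_lt hkj),
        Finset.sum_insert Finset.right_notMem_Ico]
      have hk : (if j ≤ k ∧ x k ≤ x k then Ψ k k * θ k j else 0) = Ψ k k * θ k j := by
        rw [if_pos ⟨le_of_lt hkj, le_refl _⟩]
      rw [hk]
      have h2 : (∑ u ∈ Finset.Ico j k, if j ≤ u ∧ x u ≤ x k then Ψ k u * θ u j else 0)
          = ∑ u ∈ Finset.Ico j k, (if x u ≤ x k then (1 : ℂ) else 0) * Ψ k u * θ u j := by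
        refine Finset.sum_congr rfl fun u hu => ?_
        have hju : j ≤ u := (Finset.mem_Ico.mp hu).1
        by_cases h : x u ≤ x k <;> simp [h, hju]
      rw [h2, hθ j k hkj]
      field_simp [hΨne k]
      ring
  -- M * Et = 1
  have hMF : M * Et = 1 := by
    ext i j
    rw [Matrix.mul_apply]
    simp only [hMdef, hEtdef, Matrix.of_apply]
    have h1 : ∀ v : Fin n, μ i v * (if x v ≤ x j then (1 : ℂ) else 0)
        = if x v ≤ x j then μ i v else 0 := by
      intro v; by_cases h : x v ≤ x j <;> simp [h]
    rw [Finset.sum_congr rfl fun v _ => h1 v]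
    by_cases hij : x i ≤ x j
    · have h2 : ∀ v : Fin n, (if x v ≤ x j then μ i v else 0)
          = if x i ≤ x v ∧ x v ≤ x j then μ i v else 0 := by
        intro v
        by_cases h1 : x v ≤ x j <;> by_cases h2 : x i ≤ x v <;>
          simp [h1, h2, hμ0 i v]
      rw [Finset.sum_congr rfl fun v _ => h2 v, ← Finset.sum_filter, hμ i j hij,
        Matrix.one_apply]
    · have hne : i ≠ j := fun h => hij (h ▸ le_refl _)
      rw [Matrix.one_apply_ne hne]
      refine Finset.sum_eq_zero fun v _ => ?_
      by_cases h : x v ≤ x j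
      · rw [if_pos h]
        refine hμ0 i v fun hiv => hij (hiv.trans h)
      · rw [if_neg h]
  have hFtM : Et * M = 1 := mul_eq_one_comm.mp hMF
  have hTL : T * L = 1 := mul_eq_one_comm.mp hLT
  constructor
  · rw [hA, hB, Matrix.mul_assoc, ← Matrix.mul_assoc Et M T, hFtM,
      Matrix.one_mul, hLT]
  · rw [hA, hB, Matrix.mul_assoc, ← Matrix.mul_assoc T L Et, hTL,
      Matrix.one_mul, hMF]
end

section
/- Suppose S is join closed and let k be the number of indices i ∈ {1,…,n} with Ψ'_{S,f_i}(x_i) = 0. If k > 0, then n − k ≤ rank [S]_{f_1,…,f_n} ≤ n − 1. -/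
/-!
With `ζ` the zeta matrix of `S` (invertible, with inverse given by `μ_S`), Möbius inversion
`f_i(x_w) = ∑_{x_w ≤ x_v} Ψ'_{S,f_i}(x_v)` applied at `x_w = x_i ∨ x_j`, together with
`x_i ∨ x_j ≤ x_v ↔ x_i ≤ x_v ∧ x_j ≤ x_v`, factors the join matrix as `E ζᵀ`, where
`E_{iv} = [x_i ≤ x_v] Ψ'_{S,f_i}(x_v)`. So the rank of the join matrix is that of `E`, which is
upper triangular with diagonal `Ψ'_{S,f_i}(x_i)`. A triangular matrix with `k > 0` zeros on its
diagonal is singular, and its nonsingular principal submatrix on the other `n - k` indices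
bounds its rank from below.
-/

open Finset Matrix
open scoped Classical

namespace Matrix

variable {ι : Type*} [Fintype ι]

section Zeta

variable {P R : Type*}

variable (R) in
noncomputable def zetaMatrix [Zero R] [One R] [Preorder P] (x : ι → P) : Matrix ι ι R :=
  of fun i j => if x i ≤ x j then 1 else 0

theorem mul_zetaMatrix_eq_one [DecidableEq ι] [Preorder P] [NonAssocSemiring R] {x : ι → P}
    {μ : Matrix ι ι R} (hμ0 : ∀ i j, ¬ x i ≤ x j → μ i j = 0)
    (hμ : ∀ i j, x i ≤ x j →
      (∑ v ∈ univ.filter (fun v => x i ≤ x v ∧ x v ≤ x j), μ i v) =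
        if i = j then 1 else 0) :
    μ * zetaMatrix R x = 1 := by
  ext i j
  simp only [mul_apply, zetaMatrix, of_apply, mul_ite, mul_one, mul_zero, one_apply]
  by_cases hij : x i ≤ x j
  · rw [← hμ i j hij, ← sum_filter]
    refine (sum_subset (fun v hv => ?_) fun v hv hv' => ?_).symm <;> simp_all
  · rw [if_neg (by rintro rfl; exact hij le_rfl)]
    refine sum_eq_zero fun v _ => ?_
    split_ifs with hvj
    · exact hμ0 i v fun hiv => hij (hiv.trans hvj)
    · rfl

variable [Lattice P] [CommSemiring R]

theorem of_sup_eq_mul_zetaMatrix_transpose [DecidableEq ι] {x : ι → P}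
    (hjoin : ∀ i j, ∃ k, x k = x i ⊔ x j)
    {μ : Matrix ι ι R} (hζμ : zetaMatrix R x * μ = 1) (f : ι → P → R) :
    of (fun i j => f i (x i ⊔ x j)) =
      of (fun i v => if x i ≤ x v then (μ *ᵥ fun u => f i (x u)) v else 0) *
        (zetaMatrix R x)ᵀ := by
  ext i j
  obtain ⟨w, hw⟩ := hjoin i j
  have hinv : zetaMatrix R x *ᵥ (μ *ᵥ fun u => f i (x u)) = fun u => f i (x u) := by
    rw [mulVec_mulVec, hζμ, one_mulVec]
  rw [of_apply, ← hw, ← congrFun hinv w, mulVec, dotProduct, mul_apply]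
  refine sum_congr rfl fun v _ => ?_
  simp only [zetaMatrix, of_apply, transpose_apply, hw, sup_le_iff, ite_and]
  split_ifs <;> simp

end Zeta

section Triangular

variable {K : Type*} [Field K]

theorem rank_lt_card_of_det_eq_zero [DecidableEq ι] {A : Matrix ι ι K} (h : A.det = 0) :
    A.rank < Fintype.card ι := by
  obtain ⟨v, hv, hAv⟩ := exists_mulVec_eq_zero_iff.mpr h
  have hker : 0 < Module.finrank K (LinearMap.ker A.mulVecLin) :=
    Module.finrank_pos_iff_exists_ne_zero.mpr ⟨⟨v, hAv⟩, fun h => hv congr($h.1)⟩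
  have := LinearMap.finrank_range_add_finrank_ker A.mulVecLin
  rw [Module.finrank_fintype_fun_eq_card] at this
  exact Nat.lt_of_lt_of_eq (Nat.lt_add_of_pos_right hker) this

variable [LinearOrder ι] {M : Matrix ι ι K}

theorem IsUpperTriangular.rank_lt_card (hM : M.IsUpperTriangular) (h : ∃ i, M i i = 0) :
    M.rank < Fintype.card ι := by
  obtain ⟨i, hi⟩ := h
  exact rank_lt_card_of_det_eq_zero <| by
    rw [det_of_isUpperTriangular hM]; exact prod_eq_zero (mem_univ i) hi

theorem IsUpperTriangular.card_diag_ne_zero_le_rank (hM : M.IsUpperTriangular) :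
    #{i | M i i ≠ 0} ≤ M.rank := by
  let s := {i // M i i ≠ 0}
  let N : Matrix s s K := M.submatrix Subtype.val Subtype.val
  have hN : N.IsUpperTriangular := fun _ _ hij => hM hij
  have hdet : N.det ≠ 0 := by
    rw [det_of_isUpperTriangular hN, prod_ne_zero_iff]
    exact fun i _ => i.2
  calc #{i | M i i ≠ 0} = N.rank := by
        rw [rank_of_det_ne_zero hdet, Fintype.card_subtype]
    _ ≤ M.rank := rank_submatrix_le M _ _

end Triangular

end Matrix

theorem row_adjusted_join_matrix_rank_bounds_general
    {P : Type*} [Lattice P] {n : ℕ}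
    (x : Fin n → P) (f : Fin n → P → ℂ) (μ : Fin n → Fin n → ℂ)
    (hxord : ∀ i j : Fin n, x i ≤ x j → i ≤ j)
    (hjoin : ∀ i j : Fin n, ∃ k : Fin n, x k = x i ⊔ x j)
    (hμ0 : ∀ i j : Fin n, ¬ x i ≤ x j → μ i j = 0)
    (hμ : ∀ i j : Fin n, x i ≤ x j →
      (∑ v ∈ univ.filter (fun v => x i ≤ x v ∧ x v ≤ x j), μ i v) =
        if i = j then 1 else 0)
    (k : ℕ)
    (hk : k = (univ.filter (fun i : Fin n =>
      (∑ v ∈ univ.filter (fun v => x i ≤ x v), f i (x v) * μ i v) = 0)).card)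
    (hkpos : 0 < k) :
    n - k ≤ (Matrix.of fun i j : Fin n => f i (x i ⊔ x j)).rank ∧
      (Matrix.of fun i j : Fin n => f i (x i ⊔ x j)).rank ≤ n - 1 := by
  set E : Matrix (Fin n) (Fin n) ℂ :=
    of fun i v => if x i ≤ x v then (of μ *ᵥ fun u => f i (x u)) v else 0
  have hζμ : zetaMatrix ℂ x * of μ = 1 := mul_eq_one_comm.mp (mul_zetaMatrix_eq_one hμ0 hμ)
  have hrank : (of fun i j => f i (x i ⊔ x j)).rank = E.rank := by
    rw [of_sup_eq_mul_zetaMatrix_transpose hjoin hζμ f]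
    refine rank_mul_eq_left_of_isUnit_det _ _ ?_
    rw [det_transpose]
    exact isUnit_det_of_right_inverse hζμ
  have hE : E.IsUpperTriangular := fun i j hji => if_neg fun h => (hxord i j h).not_gt hji
  have hdiag : ∀ i, E i i = ∑ v ∈ univ.filter (fun v => x i ≤ x v), f i (x v) * μ i v := by
    intro i
    rw [sum_filter_of_ne fun v _ h => not_imp_comm.mp (hμ0 i v) (right_ne_zero_of_mul h)]
    simp [E, mulVec, dotProduct, mul_comm]
  simp_rw [← hdiag] at hk
  obtain ⟨i, hi⟩ := card_pos.mp (hk ▸ hkpos)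
  have hcard : #{i | E i i = 0} + #{i | E i i ≠ 0} = n :=
    (card_filter_add_card_filter_not _).trans (card_fin n)
  have hlower := hE.card_diag_ne_zero_le_rank
  have hupper := hE.rank_lt_card ⟨i, (mem_filter.mp hi).2⟩
  rw [Fintype.card_fin] at hupper
  rw [hrank]
  omega

/-- Let `S` be join closed and `k` the number of indices `i` with
`Ψ'_{S,f i}(x i) = 0`. If `k > 0`, then
`n - k ≤ rank [S]_{f₁,…,fₙ} ≤ n - 1`. -/
theorem row_adjusted_join_matrix_rank_bounds
    {P : Type*} [Lattice P] {n : ℕ}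
    (x : Fin n → P) (f : Fin n → P → ℂ) (μ : Fin n → Fin n → ℂ)
    (hxinj : Function.Injective x)
    (hxord : ∀ i j : Fin n, x i ≤ x j → i ≤ j)
    (hjoin : ∀ i j : Fin n, ∃ k : Fin n, x k = x i ⊔ x j)
    (hμ0 : ∀ i j : Fin n, ¬ x i ≤ x j → μ i j = 0)
    (hμ : ∀ i j : Fin n, x i ≤ x j →
      (∑ v ∈ univ.filter (fun v => x i ≤ x v ∧ x v ≤ x j), μ i v) =
        if i = j then 1 else 0)
    (k : ℕ)
    (hk : k = (univ.filter (fun i : Fin n =>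
      (∑ v ∈ univ.filter (fun v => x i ≤ x v), f i (x v) * μ i v) = 0)).card)
    (hkpos : 0 < k) :
    n - k ≤ (Matrix.of fun i j : Fin n => f i (x i ⊔ x j)).rank ∧
      (Matrix.of fun i j : Fin n => f i (x i ⊔ x j)).rank ≤ n - 1 :=
  row_adjusted_join_matrix_rank_bounds_general x f μ hxord hjoin hμ0 hμ k hk hkpos
end

section
/- If the set S is join closed, then det [S]_{f_1,…,f_n} = Π_{i=1}^{n} Ψ'_{S,f_i}(x_i) = Π_{i=1}^{n} Σ_{x_i ≤ x_j} f_i(x_j) μ_S(x_i, x_j). -/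
open Finset Matrix
open scoped Classical

/-- **Determinant formula for row-adjusted join matrices.** If `S` is join
closed, then
`det [S]_{f₁,…,fₙ} = ∏ i, Ψ'_{S,f i}(x i) = ∏ i, ∑_{x i ≤ x j} f i (x j) μ_S(x i, x j)`. -/
theorem row_adjusted_join_matrix_det
    {P : Type*} [Lattice P] {n : ℕ}
    (x : Fin n → P) (f : Fin n → P → ℂ) (μ : Fin n → Fin n → ℂ)
    (hxinj : Function.Injective x)
    (hxord : ∀ i j : Fin n, x i ≤ x j → i ≤ j)
    (hjoin : ∀ i j : Fin n, ∃ k : Fin n, x k = x i ⊔ x j)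
    (hμ0 : ∀ i j : Fin n, ¬ x i ≤ x j → μ i j = 0)
    (hμ : ∀ i j : Fin n, x i ≤ x j →
      (∑ v ∈ univ.filter (fun v => x i ≤ x v ∧ x v ≤ x j), μ i v) =
        if i = j then 1 else 0) :
    (Matrix.of fun i j : Fin n => f i (x i ⊔ x j)).det =
      ∏ i : Fin n, ∑ j ∈ univ.filter (fun j => x i ≤ x j), f i (x j) * μ i j := by
  set Z : Matrix (Fin n) (Fin n) ℂ :=
    Matrix.of fun i j => if x i ≤ x j then 1 else 0 with hZ
  set Mμ : Matrix (Fin n) (Fin n) ℂ := Matrix.of fun i j => μ i j with hMμ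
  -- μ * ζ = 1
  have hMZ : Mμ * Z = 1 := by
    ext i j
    rw [Matrix.mul_apply, Matrix.one_apply]
    simp only [hZ, hMμ, Matrix.of_apply, mul_ite, mul_one, mul_zero]
    have h1 : ∀ v : Fin n, (if x v ≤ x j then μ i v else 0)
        = (if x i ≤ x v ∧ x v ≤ x j then μ i v else 0) := by
      intro v
      by_cases h1 : x v ≤ x j <;> by_cases h2 : x i ≤ x v <;>
        simp_all [hμ0 i v]
    rw [Finset.sum_congr rfl fun v _ => h1 v, Finset.sum_ite, Finset.sum_const_zero,
      add_zero]
    by_cases hij : x i ≤ x j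
    · exact hμ i j hij
    · have hempty : (univ.filter fun v => x i ≤ x v ∧ x v ≤ x j) = ∅ := by
        ext v; simp only [mem_filter, mem_univ, true_and, Finset.notMem_empty,
          iff_false]
        rintro ⟨h1, h2⟩; exact hij (h1.trans h2)
      rw [hempty, Finset.sum_empty]
      have : i ≠ j := by rintro rfl; exact hij le_rfl
      simp [this]
  have hZM : Z * Mμ = 1 := mul_eq_one_comm.mp hMZ
  -- key inversion identity
  have key : ∀ (i w : Fin n),
      (∑ k, (if x w ≤ x k then (1 : ℂ) else 0) * ∑ v, μ k v * f i (x v))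
        = f i (x w) := by
    intro i w
    have h := congrArg (fun M : Matrix (Fin n) (Fin n) ℂ =>
      (M *ᵥ fun v => f i (x v)) w) hZM
    simp only [Matrix.one_mulVec] at h
    rw [← Matrix.mulVec_mulVec] at h
    simpa [Matrix.mulVec, dotProduct, hZ, hMμ, Matrix.of_apply] using h
  set A : Matrix (Fin n) (Fin n) ℂ :=
    Matrix.of fun i k => (if x i ≤ x k then (1 : ℂ) else 0) * ∑ v, μ k v * f i (x v)
    with hA
  set B : Matrix (Fin n) (Fin n) ℂ :=
    Matrix.of fun k j => if x j ≤ x k then (1 : ℂ) else 0 with hB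
  have hfact : (Matrix.of fun i j : Fin n => f i (x i ⊔ x j)) = A * B := by
    ext i j
    rw [Matrix.mul_apply]
    obtain ⟨w, hw⟩ := hjoin i j
    simp only [hA, hB, Matrix.of_apply]
    have h2 : ∀ k : Fin n,
        ((if x i ≤ x k then (1 : ℂ) else 0) * ∑ v, μ k v * f i (x v)) *
          (if x j ≤ x k then (1 : ℂ) else 0)
        = (if x w ≤ x k then (1 : ℂ) else 0) * ∑ v, μ k v * f i (x v) := by
      intro k
      have : x w ≤ x k ↔ x i ≤ x k ∧ x j ≤ x k := by rw [hw]; exact sup_le_iff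
      by_cases h1 : x i ≤ x k <;> by_cases h2 : x j ≤ x k <;>
        simp_all
    rw [Finset.sum_congr rfl fun k _ => h2 k, key i w, hw]
  rw [hfact, Matrix.det_mul]
  -- det B = 1
  have hBdet : B.det = 1 := by
    rw [Matrix.det_of_lowerTriangular B]
    · simp [hB]
    · intro k j hkj
      have hkj' : k < j := hkj
      have : ¬ x j ≤ x k := fun h => absurd (hxord j k h) hkj'.not_ge
      simp [hB, this]
  -- det A = product of diagonal
  have hAdet : A.det = ∏ i, A i i := by
    apply Matrix.det_of_upperTriangular
    intro i k hik
    have hik' : k < i := hik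
    have : ¬ x i ≤ x k := fun h => absurd (hxord i k h) hik'.not_ge
    simp [hA, this]
  rw [hBdet, mul_one, hAdet]
  refine Finset.prod_congr rfl fun i _ => ?_
  simp only [hA, Matrix.of_apply, if_pos le_rfl, one_mul]
  rw [Finset.sum_filter]
  refine Finset.sum_congr rfl fun v _ => ?_
  by_cases h : x i ≤ x v
  · simp [h, mul_comm]
  · simp [h, hμ0 i v h]
end

section
/- If the set S is join closed, then the row-adjusted join matrix [S]_{f_1,…,f_n} is invertible if and only if Ψ'_{S,f_i}(x_i) ≠ 0 for all i = 1,…,n. -/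
open Finset Matrix
open scoped Classical

/-- If `S` is join closed, then the row-adjusted join matrix `[S]_{f₁,…,fₙ}`
is invertible iff `Ψ'_{S,f i}(x i) ≠ 0` for all `i`. -/
theorem row_adjusted_join_matrix_isUnit_iff
    {P : Type*} [Lattice P] {n : ℕ}
    (x : Fin n → P) (f : Fin n → P → ℂ) (μ : Fin n → Fin n → ℂ)
    (hxinj : Function.Injective x)
    (hxord : ∀ i j : Fin n, x i ≤ x j → i ≤ j)
    (hjoin : ∀ i j : Fin n, ∃ k : Fin n, x k = x i ⊔ x j)
    (hμ0 : ∀ i j : Fin n, ¬ x i ≤ x j → μ i j = 0)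
    (hμ : ∀ i j : Fin n, x i ≤ x j →
      (∑ v ∈ univ.filter (fun v => x i ≤ x v ∧ x v ≤ x j), μ i v) =
        if i = j then 1 else 0) :
    IsUnit (Matrix.of fun i j : Fin n => f i (x i ⊔ x j)) ↔
      ∀ i : Fin n,
        (∑ v ∈ univ.filter (fun v => x i ≤ x v), f i (x v) * μ i v) ≠ 0 := by
  classical
  set M : Matrix (Fin n) (Fin n) ℂ := Matrix.of μ with hMdef
  set Z : Matrix (Fin n) (Fin n) ℂ :=
    Matrix.of (fun v j : Fin n => if x v ≤ x j then (1 : ℂ) else 0) with hZdef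
  have hMZ : M * Z = 1 := by
    ext i j
    simp only [Matrix.mul_apply, Matrix.one_apply, hMdef, hZdef, Matrix.of_apply]
    by_cases h : x i ≤ x j
    · have := hμ i j h
      rw [Finset.sum_filter] at this
      rw [← this]
      refine Finset.sum_congr rfl fun v _ => ?_
      by_cases h1 : x i ≤ x v
      · by_cases h2 : x v ≤ x j <;> simp [h1, h2]
      · by_cases h2 : x v ≤ x j <;> simp [h1, h2, hμ0 _ _ h1]
    · have hij : i ≠ j := fun e => h (e ▸ le_refl _)
      rw [if_neg hij]
      refine Finset.sum_eq_zero fun v _ => ?_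
      by_cases h2 : x v ≤ x j
      · have h1 : ¬ x i ≤ x v := fun h1 => h (h1.trans h2)
        simp [hμ0 _ _ h1]
      · simp [h2]
  have hZM : Z * M = 1 := mul_eq_one_comm.mp hMZ
  have hZMentry : ∀ k w : Fin n,
      (∑ v : Fin n, (if x k ≤ x v then (1 : ℂ) else 0) * μ v w) =
        if k = w then 1 else 0 := by
    intro k w
    have := congrFun (congrFun hZM k) w
    simpa [Matrix.mul_apply, Matrix.one_apply, hMdef, hZdef] using this
  set B : Matrix (Fin n) (Fin n) ℂ :=
    Matrix.of (fun i v : Fin n =>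
      if x i ≤ x v then ∑ w : Fin n, f i (x w) * μ v w else 0) with hBdef
  have hA : (Matrix.of fun i j : Fin n => f i (x i ⊔ x j)) = B * Zᵀ := by
    ext i j
    obtain ⟨k, hk⟩ := hjoin i j
    simp only [Matrix.mul_apply, Matrix.transpose_apply, hBdef, hZdef, Matrix.of_apply]
    have step1 : ∀ v : Fin n,
        (if x i ≤ x v then ∑ w : Fin n, f i (x w) * μ v w else 0) *
            (if x j ≤ x v then (1 : ℂ) else 0) =
          (if x k ≤ x v then (1 : ℂ) else 0) * ∑ w : Fin n, f i (x w) * μ v w := by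
      intro v
      by_cases h1 : x i ≤ x v <;> by_cases h2 : x j ≤ x v <;>
        simp [h1, h2, hk, sup_le_iff, mul_comm]
    rw [Finset.sum_congr rfl (fun v _ => step1 v)]
    have swap : (∑ v : Fin n, (if x k ≤ x v then (1 : ℂ) else 0) *
        ∑ w : Fin n, f i (x w) * μ v w) =
        ∑ w : Fin n, f i (x w) * ∑ v : Fin n, (if x k ≤ x v then (1 : ℂ) else 0) * μ v w := by
      simp_rw [Finset.mul_sum]
      rw [Finset.sum_comm]
      exact Finset.sum_congr rfl fun w _ => Finset.sum_congr rfl fun v _ => by ring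
    rw [swap]
    simp_rw [hZMentry]
    simp [hk]
  have hZdetone : Z.det * M.det = 1 := by
    rw [← Matrix.det_mul, hZM, Matrix.det_one]
  have hZTdet : Zᵀ.det ≠ 0 := by
    rw [Matrix.det_transpose]
    exact left_ne_zero_of_mul_eq_one hZdetone
  have hBtri : B.BlockTriangular id := by
    intro i j hij
    simp only [hBdef, Matrix.of_apply]
    rw [if_neg]
    intro hle
    exact absurd (hxord i j hle) (not_le.mpr hij)
  have hBdet : B.det = ∏ i : Fin n, B i i := Matrix.det_of_upperTriangular hBtri
  have hBdiag : ∀ i : Fin n,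
      B i i = ∑ v ∈ univ.filter (fun v => x i ≤ x v), f i (x v) * μ i v := by
    intro i
    simp only [hBdef, Matrix.of_apply, if_pos (le_refl (x i))]
    rw [Finset.sum_filter]
    refine Finset.sum_congr rfl fun w _ => ?_
    by_cases h : x i ≤ x w
    · simp [h]
    · simp [h, hμ0 _ _ h]
  rw [Matrix.isUnit_iff_isUnit_det, isUnit_iff_ne_zero, hA, Matrix.det_mul]
  constructor
  · intro hne i
    have hB : B.det ≠ 0 := fun h => hne (by simp [h])
    rw [hBdet] at hB
    have := Finset.prod_ne_zero_iff.mp hB i (Finset.mem_univ i)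
    rwa [hBdiag i] at this
  · intro h
    refine mul_ne_zero ?_ hZTdet
    rw [hBdet]
    refine Finset.prod_ne_zero_iff.mpr fun i _ => ?_
    rw [hBdiag i]
    exact h i
end

section
/- Suppose the set S is join closed and Ψ'_{S,f_i}(x_i) ≠ 0 for all i = 1,…,n. Then the inverse of [S]_{f_1,…,f_n} is the n×n matrix B' = (b'_{ij}) with b'_{ij} = Σ_{k=1}^{j} μ_S(x_k, x_i) θ'_{kj}, where for each fixed j the numbers θ'_{jj}, θ'_{j−1,j}, …, θ'_{1j} are defined recursively by θ'_{jj} = 1/Ψ'_{S,f_j}(x_j) and, for k < j, θ'_{kj} = −(1/Ψ'_{S,f_k}(x_k)) Σ_{u=k+1}^{j} (E'_S)_{ku} Ψ'_{S,f_k}(x_u) θ'_{uj}. -/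
open Finset Matrix
open scoped Classical

/-- **Inverse formula for row-adjusted join matrices.** Suppose `S` is join
closed and `Ψ'_{S,f i}(x i) ≠ 0` for all `i`. With `θ'` defined recursively by
`θ' j j = 1 / Ψ'_{S,f j}(x j)` and, for `k < j`,
`θ' k j = -(1 / Ψ'_{S,f k}(x k)) * ∑_{u=k+1}^{j} (E'_S)_{k u} Ψ'_{S,f k}(x u) θ' u j`,
the inverse of `[S]_{f₁,…,fₙ}` is the matrix `B'` with
`B' i j = ∑_{k=1}^{j} μ_S(x k, x i) θ' k j`. -/
theorem row_adjusted_join_matrix_inverse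
    {P : Type*} [Lattice P] {n : ℕ}
    (x : Fin n → P) (f : Fin n → P → ℂ) (μ : Fin n → Fin n → ℂ)
    (Ψ : Fin n → Fin n → ℂ) (θ : Fin n → Fin n → ℂ)
    (hxinj : Function.Injective x)
    (hxord : ∀ i j : Fin n, x i ≤ x j → i ≤ j)
    (hjoin : ∀ i j : Fin n, ∃ k : Fin n, x k = x i ⊔ x j)
    (hμ0 : ∀ i j : Fin n, ¬ x i ≤ x j → μ i j = 0)
    (hμ : ∀ i j : Fin n, x i ≤ x j →
      (∑ v ∈ univ.filter (fun v => x i ≤ x v ∧ x v ≤ x j), μ i v) =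
        if i = j then 1 else 0)
    (hΨ : ∀ i k : Fin n,
      Ψ i k = ∑ v ∈ univ.filter (fun v => x k ≤ x v), f i (x v) * μ k v)
    (hΨne : ∀ i : Fin n, Ψ i i ≠ 0)
    (hθdiag : ∀ j : Fin n, θ j j = 1 / Ψ j j)
    (hθ : ∀ j k : Fin n, k < j →
      θ k j = -(1 / Ψ k k) *
        ∑ u ∈ Finset.Ioc k j, (if x k ≤ x u then (1 : ℂ) else 0) * Ψ k u * θ u j) :
    (Matrix.of fun i j : Fin n => f i (x i ⊔ x j)) *
        (Matrix.of fun i j : Fin n => ∑ k ∈ Finset.Iic j, μ k i * θ k j) = 1 ∧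
    (Matrix.of fun i j : Fin n => ∑ k ∈ Finset.Iic j, μ k i * θ k j) *
        (Matrix.of fun i j : Fin n => f i (x i ⊔ x j)) = 1 := by
  classical
  -- Matrices
  set Z : Matrix (Fin n) (Fin n) ℂ :=
    Matrix.of (fun i j : Fin n => if x i ≤ x j then (1 : ℂ) else 0) with hZdef
  set M : Matrix (Fin n) (Fin n) ℂ := Matrix.of (fun i j : Fin n => μ i j) with hMdef
  set F : Matrix (Fin n) (Fin n) ℂ := Matrix.of (fun i v : Fin n => f i (x v)) with hFdef
  set Ψm : Matrix (Fin n) (Fin n) ℂ := Matrix.of (fun i k : Fin n => Ψ i k) with hΨmdef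
  set C : Matrix (Fin n) (Fin n) ℂ :=
    Matrix.of (fun i k : Fin n => (if x i ≤ x k then (1 : ℂ) else 0) * Ψ i k) with hCdef
  set Θ : Matrix (Fin n) (Fin n) ℂ :=
    Matrix.of (fun k j : Fin n => if k ≤ j then θ k j else 0) with hΘdef
  have hMZ : M * Z = 1 := by
    ext i j
    rw [Matrix.mul_apply, Matrix.one_apply]
    simp only [hMdef, hZdef, Matrix.of_apply]
    by_cases h : x i ≤ x j
    · rw [← hμ i j h, Finset.sum_filter]
      apply Finset.sum_congr rfl
      intro v _
      by_cases h1 : x v ≤ x j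
      · by_cases h2 : x i ≤ x v
        · simp [h1, h2]
        · simp [h1, h2, hμ0 i v h2]
      · simp [h1]
    · have hij : i ≠ j := fun e => h (e ▸ le_refl (x i))
      rw [if_neg hij]
      apply Finset.sum_eq_zero
      intro v _
      by_cases h1 : x v ≤ x j
      · have h2 : ¬ x i ≤ x v := fun h2 => h (h2.trans h1)
        simp [hμ0 i v h2]
      · simp [h1]
  have hZM : Z * M = 1 := mul_eq_one_comm.mp hMZ
  have hΨm : Ψm = F * M.transpose := by
    ext i k
    rw [Matrix.mul_apply]
    simp only [hΨmdef, hFdef, hMdef, Matrix.of_apply, Matrix.transpose_apply]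
    rw [hΨ i k, Finset.sum_filter]
    apply Finset.sum_congr rfl
    intro v _
    by_cases h1 : x k ≤ x v
    · simp [h1]
    · simp [h1, hμ0 k v h1]
  have hFeq : F = Ψm * Z.transpose := by
    rw [hΨm, Matrix.mul_assoc, ← Matrix.transpose_mul, hZM, Matrix.transpose_one,
      Matrix.mul_one]
  have hA : (Matrix.of fun i j : Fin n => f i (x i ⊔ x j)) = C * Z.transpose := by
    ext i j
    obtain ⟨m, hm⟩ := hjoin i j
    have hf : f i (x m) = ∑ k, Ψ i k * (if x m ≤ x k then (1 : ℂ) else 0) := by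
      have := congrFun (congrFun hFeq i) m
      simpa [hFdef, hΨmdef, hZdef, Matrix.mul_apply] using this
    rw [Matrix.mul_apply]
    simp only [Matrix.of_apply, hCdef, hZdef, Matrix.transpose_apply, ← hm, hf]
    apply Finset.sum_congr rfl
    intro k _
    have : x m ≤ x k ↔ x i ≤ x k ∧ x j ≤ x k := by rw [hm]; exact sup_le_iff
    by_cases h1 : x i ≤ x k <;> by_cases h2 : x j ≤ x k <;> simp [this, h1, h2]
  have hB : (Matrix.of fun i j : Fin n => ∑ k ∈ Finset.Iic j, μ k i * θ k j)
      = M.transpose * Θ := by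
    ext i j
    rw [Matrix.mul_apply]
    simp only [Matrix.of_apply, hMdef, hΘdef, Matrix.transpose_apply, mul_ite, mul_zero]
    rw [← Finset.sum_filter]
    apply Finset.sum_congr _ (fun k _ => rfl)
    ext k
    simp
  have hCΘ : C * Θ = 1 := by
    ext i j
    rw [Matrix.mul_apply, Matrix.one_apply]
    simp only [hCdef, hΘdef, Matrix.of_apply]
    rcases lt_trichotomy i j with hij | hij | hij
    · rw [if_neg hij.ne]
      have hsupp : ∀ k, k ∉ Finset.Icc i j →
          (if x i ≤ x k then (1 : ℂ) else 0) * Ψ i k * (if k ≤ j then θ k j else 0) = 0 := by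
        intro k hk
        rw [Finset.mem_Icc, not_and_or] at hk
        rcases hk with hk | hk
        · have : ¬ x i ≤ x k := fun h => hk (hxord i k h)
          simp [this]
        · simp [hk]
      rw [← Finset.sum_subset (Finset.subset_univ (Finset.Icc i j))
        (fun k _ hk => hsupp k hk)]
      have hIcc : Finset.Icc i j = insert i (Finset.Ioc i j) := by
        rw [Finset.Icc_eq_cons_Ioc hij.le, Finset.cons_eq_insert]
      rw [hIcc, Finset.sum_insert (by simp)]
      have h1 : (if x i ≤ x i then (1:ℂ) else 0) * Ψ i i * (if i ≤ j then θ i j else 0)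
          = Ψ i i * θ i j := by simp [hij.le]
      rw [h1]
      have h2 : ∑ k ∈ Finset.Ioc i j,
          (if x i ≤ x k then (1:ℂ) else 0) * Ψ i k * (if k ≤ j then θ k j else 0)
          = ∑ k ∈ Finset.Ioc i j, (if x i ≤ x k then (1:ℂ) else 0) * Ψ i k * θ k j := by
        apply Finset.sum_congr rfl
        intro k hk
        rw [Finset.mem_Ioc] at hk
        rw [if_pos hk.2]
      rw [h2, hθ j i hij]
      field_simp [hΨne i]
      ring
    · subst hij
      rw [if_pos rfl]
      rw [Finset.sum_eq_single i]
      · simp [hθdiag i, hΨne i]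
      · intro k _ hki
        by_cases h1 : x i ≤ x k
        · have : i ≤ k := hxord i k h1
          have : ¬ k ≤ i := fun h => hki (le_antisymm h this)
          simp [this]
        · simp [h1]
      · simp
    · rw [if_neg hij.ne']
      apply Finset.sum_eq_zero
      intro k _
      by_cases h1 : x i ≤ x k
      · have hik : i ≤ k := hxord i k h1
        have : ¬ k ≤ j := fun h => absurd (h.trans_lt hij) (not_lt.mpr hik)
        simp [this]
      · simp [h1]
  have hAB : (Matrix.of fun i j : Fin n => f i (x i ⊔ x j)) *
      (Matrix.of fun i j : Fin n => ∑ k ∈ Finset.Iic j, μ k i * θ k j) = 1 := by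
    rw [hA, hB, Matrix.mul_assoc, ← Matrix.mul_assoc Z.transpose, ← Matrix.transpose_mul,
      hMZ, Matrix.transpose_one, Matrix.one_mul, hCΘ]
  exact ⟨hAB, mul_eq_one_comm.mp hAB⟩
end
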